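/- Let δ be a dissimilarity map on X, |X| = n ≥ 5, quartet consistent with a binary phylogenetic X-tree T. If (i,k) is a cherry of T and j ∈ X is distinct from i and k, then Z_δ(i,k) - Z_δ(i,j) = ((n-1)/3) · ∑_{x ∈ X\{i,j,k}} (w_δ(ik:xj) - w_δ(ij:xk)) (with Z scaled by C(n-1,2)), and this quantity is strictly positive. In particular, if i belongs to a cherry of T, then any pair containing i that maximizes the scaled Z-criterion must be the cherry of T containing i. -/

import Mathlib

open Finset
open scoped Classical

/-- `w_δ(ij:kl) = (1/2)(δ(i,k)+δ(i,l)+δ(j,k)+δ(j,l)) - δ(i,j) - δ(k,l)`. -/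
noncomputable def njw {X : Type*} (δ : X → X → ℝ) (i j k l : X) : ℝ :=
  (δ i k + δ i l + δ j k + δ j l) / 2 - δ i j - δ k l

/-- Edge `e` (with split side `σ e`) separates the pair `p,q` from the pair `r,s`. -/
def sepE {X E : Type*} (σ : E → Finset X) (e : E) (p q r s : X) : Prop :=
  (p ∈ σ e ∧ q ∈ σ e ∧ r ∉ σ e ∧ s ∉ σ e) ∨
  (p ∉ σ e ∧ q ∉ σ e ∧ r ∈ σ e ∧ s ∈ σ e)

/-- `(ij:kl)` is a quartet of the tree encoded by the split system `σ`:
some internal edge separates `{i,j}` from `{k,l}`. -/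
def isQuartet {X E : Type*} (σ : E → Finset X) (i j k l : X) : Prop :=
  ∃ e, sepE σ e i j k l

/-- Pairwise compatibility of the splits: the condition under which a split system
is exactly the split system of a (phylogenetic) tree. -/
def splitsCompatible {X E : Type*} [Fintype X] (σ : E → Finset X) : Prop :=
  ∀ e f, σ e ⊆ σ f ∨ σ f ⊆ σ e ∨ (∀ a, a ∈ σ e → a ∉ σ f) ∨ (∀ a, a ∈ σ e ∨ a ∈ σ f)

/-- A dissimilarity map `δ` is quartet consistent with the tree encoded by `σ`. -/
def quartetConsistent {X E : Type*} (σ : E → Finset X) (δ : X → X → ℝ) : Prop :=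
  ∀ i j k l : X, i ≠ j → i ≠ k → i ≠ l → j ≠ k → j ≠ l → k ≠ l →
    isQuartet σ i j k l →
      njw δ i j k l > max (njw δ i k j l) (njw δ i l j k)

/-- The scaled Z-criterion `Z_δ(i,j) = ∑_{{k,l} ⊆ X\{i,j}} w_δ(ij:kl)`
(sum over unordered pairs, written as half the sum over ordered pairs). -/
noncomputable def njZ {X : Type*} [Fintype X] [DecidableEq X]
    (δ : X → X → ℝ) (i j : X) : ℝ :=
  (1 / 2) * ∑ k ∈ (Finset.univ.erase i).erase j,
    ∑ l ∈ ((Finset.univ.erase i).erase j).erase k, njw δ i j k l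

/-- `(x,y)` is a cherry of the tree encoded by `σ`: some edge induces the split
`{x,y} | X \ {x,y}`. -/
def isCherry {X E : Type*} [Fintype X] [DecidableEq X]
    (σ : E → Finset X) (x y : X) : Prop :=
  x ≠ y ∧ ∃ e, σ e = {x, y} ∨ σ e = ({x, y} : Finset X)ᶜ

/-! Write `g x = w(ik:xj) - w(ij:xk)`. For `p, q ∉ {i, j, k}` the weight difference
`w(ik:pq) - w(ij:pq)` equals `(g p + g q) / 3`, an identity of linear forms in `δ`. Splitting off
`j` from the pairs in `Z(i,k)` and `k` from those in `Z(i,j)`, the difference of the two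
criteria becomes `(1 + (n - 4)/3) ∑ g = ((n - 1)/3) ∑ g`. When `(i,k)` is a cherry,
`(ik:xj)` is a quartet of the tree, so quartet consistency makes every `g x` positive. -/

section OrderedPairs

variable {ι M : Type*} [DecidableEq ι]

theorem sum_sum_erase_eq_of_mem [AddCommMonoid M] (g : ι → ι → M) {A : Finset ι} {a : ι}
    (ha : a ∈ A) :
    ∑ p ∈ A, ∑ q ∈ A.erase p, g p q =
      ∑ q ∈ A.erase a, (g a q + g q a) + ∑ p ∈ A.erase a, ∑ q ∈ (A.erase a).erase p, g p q := by
  have hrow : ∀ p ∈ A.erase a, ∑ q ∈ A.erase p, g p q =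
      g p a + ∑ q ∈ (A.erase a).erase p, g p q := fun p hp => by
    rw [← add_sum_erase _ _ (mem_erase.2 ⟨(ne_of_mem_erase hp).symm, ha⟩), erase_right_comm]
  rw [← add_sum_erase A _ ha, sum_congr rfl hrow, sum_add_distrib, sum_add_distrib, add_assoc]

theorem sum_sum_erase_add [CommRing M] (f : ι → M) (S : Finset ι) :
    ∑ p ∈ S, ∑ q ∈ S.erase p, (f p + f q) = 2 * ((#S : M) - 1) * ∑ p ∈ S, f p := by
  have hrow : ∀ p ∈ S, ∑ q ∈ S.erase p, (f p + f q) =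
      ((#S : M) - 1) * f p + (∑ q ∈ S, f q - f p) := by
    intro p hp
    rw [sum_add_distrib, sum_const, card_erase_of_mem hp, nsmul_eq_mul,
      Nat.cast_pred (card_pos.2 ⟨p, hp⟩), sum_erase_eq_sub hp]
  rw [sum_congr rfl hrow, sum_add_distrib, sum_sub_distrib, sum_const, nsmul_eq_mul,
    ← mul_sum]
  ring

end OrderedPairs

section QuartetWeights

variable {X : Type*} {δ : X → X → ℝ}

theorem njw_swap_right (hsym : ∀ x y, δ x y = δ y x) (i j k l : X) :
    njw δ i j k l = njw δ i j l k := by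
  simp only [njw, hsym k l]
  ring

theorem njw_sub_njw (hsym : ∀ x y, δ x y = δ y x) (i j k p q : X) :
    njw δ i k p q - njw δ i j p q =
      ((njw δ i k p j - njw δ i j p k) + (njw δ i k q j - njw δ i j q k)) / 3 := by
  simp only [njw, hsym p j, hsym p k, hsym q j, hsym q k, hsym k j]
  ring

theorem isQuartet_of_isCherry {E : Type*} [Fintype X] [DecidableEq X] {σ : E → Finset X}
    {i k x j : X} (hc : isCherry σ i k) (hxi : x ≠ i) (hxk : x ≠ k) (hji : j ≠ i)
    (hjk : j ≠ k) : isQuartet σ i k x j := by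
  obtain ⟨-, e, he | he⟩ := hc
  · exact ⟨e, .inl (by simp [he, hxi, hxk, hji, hjk])⟩
  · exact ⟨e, .inr (by simp [he, hxi, hxk, hji, hjk])⟩

theorem njw_sub_njw_pos_of_isQuartet {E : Type*} {σ : E → Finset X}
    (hsym : ∀ x y, δ x y = δ y x) (hqc : quartetConsistent σ δ) {i j k x : X}
    (hik : i ≠ k) (hix : i ≠ x) (hij : i ≠ j) (hkx : k ≠ x) (hkj : k ≠ j) (hxj : x ≠ j)
    (hq : isQuartet σ i k x j) : 0 < njw δ i k x j - njw δ i j x k := by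
  have h := hqc i k x j hik hix hij hkx hkj hxj hq
  rw [gt_iff_lt, max_lt_iff, njw_swap_right hsym i j k x] at h
  linarith [h.2]

end QuartetWeights

theorem card_erase_erase_erase_univ_add_three {X : Type*} [Fintype X] [DecidableEq X]
    {i j k : X} (hij : i ≠ j) (hik : i ≠ k) (hjk : j ≠ k) :
    #(((univ.erase i).erase j).erase k) + 3 = Fintype.card X := by
  have hk : k ∈ (univ.erase i).erase j := by simp [hik.symm, hjk.symm]
  rw [card_erase_of_mem hk, card_erase_of_mem (mem_erase.2 ⟨hij.symm, mem_univ j⟩),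
    card_erase_of_mem (mem_univ i), card_univ]
  have := card_le_univ ({i, j, k} : Finset X)
  rw [card_insert_of_notMem (by simp [hij, hik]), card_pair hjk] at this
  omega

theorem njZ_sub_njZ {X : Type*} [Fintype X] [DecidableEq X] {δ : X → X → ℝ}
    (hsym : ∀ x y, δ x y = δ y x) {i j k : X} (hij : i ≠ j) (hik : i ≠ k) (hjk : j ≠ k) :
    njZ δ i k - njZ δ i j =
      (((Fintype.card X : ℝ) - 1) / 3) *
        ∑ x ∈ ((univ.erase i).erase j).erase k, (njw δ i k x j - njw δ i j x k) := by
  set S := ((univ.erase i).erase j).erase k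
  set g : X → ℝ := fun x => njw δ i k x j - njw δ i j x k
  have hcard : (#S : ℝ) + 3 = Fintype.card X := by
    exact_mod_cast card_erase_erase_erase_univ_add_three hij hik hjk
  have hsplit : ∑ q ∈ S, ((njw δ i k j q + njw δ i k q j) - (njw δ i j k q + njw δ i j q k)) =
      2 * ∑ q ∈ S, g q := by
    rw [mul_sum]
    refine sum_congr rfl fun q _ => ?_
    rw [njw_swap_right hsym i k j q, njw_swap_right hsym i j k q]
    ring
  have hinner : ∑ p ∈ S, ∑ q ∈ S.erase p, (njw δ i k p q - njw δ i j p q) =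
      2 * ((#S : ℝ) - 1) * (∑ p ∈ S, g p) / 3 := by
    simp only [njw_sub_njw hsym, ← sum_div, sum_sum_erase_add g S, g]
  simp only [sum_sub_distrib] at hsplit hinner
  unfold njZ
  rw [sum_sum_erase_eq_of_mem _ (by simp [hij.symm, hjk] : j ∈ (univ.erase i).erase k),
    sum_sum_erase_eq_of_mem _ (by simp [hik.symm, hjk.symm] : k ∈ (univ.erase i).erase j),
    erase_right_comm]
  rw [← hcard]
  linear_combination (1 / 2 : ℝ) * hsplit + (1 / 2 : ℝ) * hinner

theorem statement_8_general {X E : Type*} [Fintype X] [DecidableEq X]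
    (hn : 5 ≤ Fintype.card X)
    (σ : E → Finset X)
    (δ : X → X → ℝ)
    (hsym : ∀ x y, δ x y = δ y x)
    (hqc : quartetConsistent σ δ)
    (i k : X) (hcherry : isCherry σ i k) :
    ∀ j : X, j ≠ i → j ≠ k →
      (njZ δ i k - njZ δ i j =
        (((Fintype.card X : ℝ) - 1) / 3) *
          ∑ x ∈ ((Finset.univ.erase i).erase j).erase k,
            (njw δ i k x j - njw δ i j x k)) ∧
      0 < njZ δ i k - njZ δ i j := by
  intro j hji hjk
  have hik : i ≠ k := hcherry.1
  have hdiff := njZ_sub_njZ hsym hji.symm hik hjk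
  have hgap_pos : ∀ x ∈ ((univ.erase i).erase j).erase k, 0 < njw δ i k x j - njw δ i j x k := by
    intro x hx
    obtain ⟨hxk, hxj, hxi, -⟩ : x ≠ k ∧ x ≠ j ∧ x ≠ i ∧ x ∈ univ := by
      simpa only [mem_erase] using hx
    exact njw_sub_njw_pos_of_isQuartet hsym hqc hik hxi.symm hji.symm hxk.symm hjk.symm hxj
      (isQuartet_of_isCherry hcherry hxi hxk hji hjk)
  have hne : (((univ.erase i).erase j).erase k).Nonempty := by
    rw [← card_pos]
    have := card_erase_erase_erase_univ_add_three hji.symm hik hjk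
    omega
  have hn' : (5 : ℝ) ≤ Fintype.card X := by exact_mod_cast hn
  exact ⟨hdiff, hdiff ▸ mul_pos (by linarith) (sum_pos hgap_pos hne)⟩

/-- if `δ` is quartet consistent with the tree `σ`, `(i,k)` is a cherry,
and `j ∉ {i,k}`, then (with the scaled Z-criterion and `n = |X| ≥ 5`)
`Z(i,k) - Z(i,j) = ((n-1)/3) ∑_{x ∈ X\{i,j,k}} (w(ik:xj) - w(ij:xk)) > 0`;
in particular any Z-maximizing pair containing `i` is the cherry containing `i`. -/
theorem statement_8 {X E : Type*} [Fintype X] [DecidableEq X]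
    (hn : 5 ≤ Fintype.card X)
    (σ : E → Finset X)
    (hcompat : splitsCompatible σ)
    (hnontriv : ∀ e, (σ e).Nonempty ∧ σ e ≠ Finset.univ)
    (δ : X → X → ℝ)
    (hsym : ∀ x y, δ x y = δ y x) (hdiag : ∀ x, δ x x = 0)
    (hqc : quartetConsistent σ δ)
    (i k : X) (hcherry : isCherry σ i k) :
    ∀ j : X, j ≠ i → j ≠ k →
      (njZ δ i k - njZ δ i j =
        (((Fintype.card X : ℝ) - 1) / 3) *
          ∑ x ∈ ((Finset.univ.erase i).erase j).erase k,
            (njw δ i k x j - njw δ i j x k)) ∧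
      0 < njZ δ i k - njZ δ i j :=
  statement_8_general hn σ δ hsym hqc i k hcherry
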